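/- Let 0 < α₁ < β₁ < ⋯ < α_N < β_N and define z(t) = Σ_{i=1}^N (-k_i) e^{-β_i t} for t ≥ 0, where k_i = (α_i - β_i)·∏_{j≠i}(α_j - β_i)/(β_j - β_i). Then z(t) ≥ 0 for all t ≥ 0 and ∫₀^∞ z(t) dt = 1 - ∏_{i=1}^N α_i/β_i < 1. -/

import Mathlib

/-!
With `M(s) = ∏ (s + αᵢ)/(s + βᵢ)`, the numbers `kᵢ` are the residues of `M` at its simple poles
`-βᵢ`, so the partial fraction decomposition `M(s) - 1 = ∑ kᵢ / (s + βᵢ)` (the Lagrange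
interpolation of the numerator minus the denominator at the poles) gives at `s = 0` the value
`∫₀^∞ z = ∑ (-kᵢ)/βᵢ = 1 - M(0)`. Interlacing makes every factor `(αⱼ - βᵢ)/(βⱼ - βᵢ)` positive,
hence `kᵢ < 0` and `z ≥ 0`.
-/

open Finset MeasureTheory Polynomial Lagrange

namespace Lagrange

variable {F ι : Type*} [Field F] [DecidableEq ι] (s : Finset ι) (a b : ι → F)

/-- The residue of `nodal s a / nodal s b` at its pole `b i`. -/
noncomputable def nodalResidue (i : ι) : F :=
  (nodal s a).eval (b i) / (nodal (s.erase i) b).eval (b i)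

variable {s b}

theorem nodal_sub_nodal_eq_sum (hb : Set.InjOn b s) :
    nodal s a - nodal s b = ∑ i ∈ s, C (nodalResidue s a b i) * nodal (s.erase i) b := by
  refine eq_of_degrees_lt_of_eval_index_eq s hb ?_ ?_ fun i hi => ?_
  · have hdeg : (nodal s a).degree = #s := degree_nodal
    rw [← hdeg]
    exact degree_sub_lt_left (hdeg.trans degree_nodal.symm) nodal_ne_zero
      (by rw [nodal_monic.leadingCoeff, nodal_monic.leadingCoeff])
  · rw [← mem_degreeLT]
    refine Submodule.sum_mem _ fun i hi => ?_
    rw [← smul_eq_C_mul]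
    refine Submodule.smul_mem _ _ (mem_degreeLT.mpr ?_)
    rw [degree_nodal]
    exact_mod_cast card_erase_lt_of_mem hi
  · have hne : (nodal (s.erase i) b).eval (b i) ≠ 0 :=
      eval_nodal_not_at_node fun j hj h =>
        (mem_erase.mp hj).1 (hb (mem_erase.mp hj).2 hi h.symm)
    rw [eval_sub, eval_nodal_at_node hi, sub_zero, eval_finsetSum, sum_eq_single_of_mem i hi]
    · rw [eval_mul, eval_C, nodalResidue, div_mul_cancel₀ _ hne]
    · intro j _ hji
      rw [eval_mul, eval_nodal_at_node (mem_erase.mpr ⟨hji.symm, hi⟩), mul_zero]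

theorem eval_nodal_div_eval_nodal_sub_one (hb : Set.InjOn b s) {x : F}
    (hx : ∀ i ∈ s, x ≠ b i) :
    (nodal s a).eval x / (nodal s b).eval x - 1 =
      ∑ i ∈ s, nodalResidue s a b i / (x - b i) := by
  have hQ : (nodal s b).eval x ≠ 0 := eval_nodal_not_at_node hx
  rw [← div_self hQ, ← sub_div, ← eval_sub, nodal_sub_nodal_eq_sum a hb, eval_finsetSum,
    sum_div]
  refine sum_congr rfl fun i hi => ?_
  rw [nodal_eq_mul_nodal_erase hi, eval_mul, eval_mul, eval_C, eval_sub, eval_X, eval_C,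
    mul_div_mul_right _ _ (eval_nodal_not_at_node fun j hj => hx j (mem_of_mem_erase hj))]

end Lagrange

theorem integral_Ici_sum_mul_exp_neg_mul {ι : Type*} (s : Finset ι) (c b : ι → ℝ)
    (hb : ∀ i ∈ s, 0 < b i) :
    ∫ t in Set.Ici (0 : ℝ), ∑ i ∈ s, c i * Real.exp (-b i * t) = ∑ i ∈ s, c i / b i := by
  rw [integral_Ici_eq_integral_Ioi, integral_finsetSum _ fun i hi =>
    ((exp_neg_integrableOn_Ioi 0 (hb i hi)).const_mul _)]
  refine sum_congr rfl fun i hi => ?_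
  rw [integral_const_mul, integral_exp_mul_Ioi (neg_lt_zero.mpr (hb i hi)), mul_zero,
    Real.exp_zero, neg_div_neg_eq, mul_one_div]

section Interlacing

variable {ι : Type*} [DecidableEq ι] (α β : ι → ℝ)

theorem mul_prod_div_eq_nodalResidue (s : Finset ι) {i : ι} (hi : i ∈ s) :
    (α i - β i) * ∏ j ∈ s.erase i, (α j - β i) / (β j - β i) =
      nodalResidue s (-α) (-β) i := by
  rw [prod_div_distrib, ← mul_div_assoc, mul_prod_erase s (fun j => α j - β i) hi,
    nodalResidue, eval_nodal, eval_nodal]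
  congr 1 <;> refine prod_congr rfl fun j _ => ?_ <;> simp only [Pi.neg_apply] <;> ring

variable [LinearOrder ι] {α β}

theorem mul_prod_div_neg_of_interlacing (hab : ∀ i, α i < β i)
    (hba : ∀ i j, i < j → β i < α j) (s : Finset ι) (i : ι) :
    (α i - β i) * ∏ j ∈ s.erase i, (α j - β i) / (β j - β i) < 0 := by
  refine mul_neg_of_neg_of_pos (sub_neg.mpr (hab i)) (prod_pos fun j hj => ?_)
  rcases lt_or_gt_of_ne (mem_erase.mp hj).1 with hji | hij
  · have hβα := hba j i hji
    exact div_pos_of_neg_of_neg (by linarith [hab j, hab i]) (by linarith [hab j, hab i])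
  · have hβα := hba i j hij
    exact div_pos (by linarith) (by linarith [hab j])

end Interlacing

theorem stmt9_general (N : ℕ) (α β : Fin N → ℝ)
    (hpos : ∀ i, 0 < α i)
    (hab : ∀ i, α i < β i)
    (hba : ∀ i j : Fin N, i < j → β i < α j)
    (k : Fin N → ℝ)
    (hk : ∀ i, k i = (α i - β i) *
      ∏ j ∈ Finset.univ.erase i, (α j - β i) / (β j - β i))
    (z : ℝ → ℝ) (hz : ∀ t, z t = ∑ i, (-(k i)) * Real.exp (-(β i) * t)) :
    (∀ t : ℝ, 0 ≤ t → 0 ≤ z t) ∧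
      (∫ t in Set.Ici (0:ℝ), z t) = 1 - ∏ i, α i / β i ∧
      (∫ t in Set.Ici (0:ℝ), z t) < 1 := by
  have hβpos : ∀ i, 0 < β i := fun i => (hpos i).trans (hab i)
  have hβinj : (-β).Injective := neg_injective.comp (StrictMono.injective
    fun i j hij => (hba i j hij).trans (hab j))
  have hk_neg : ∀ i, k i < 0 := fun i => hk i ▸ mul_prod_div_neg_of_interlacing hab hba _ i
  have hsum : ∑ i, -k i / β i = 1 - ∏ i, α i / β i := by
    have hpf := eval_nodal_div_eval_nodal_sub_one (s := univ) (-α) hβinj.injOn (x := 0)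
      fun i _ => by simpa using (hβpos i).ne'
    simp only [eval_nodal, ← mul_prod_div_eq_nodalResidue α β _ (mem_univ _), ← hk] at hpf
    simp only [Pi.neg_apply, zero_sub, neg_neg, ← prod_div_distrib] at hpf
    rw [sum_congr rfl fun i _ => neg_div (β i) (k i), sum_neg_distrib, ← hpf, neg_sub]
  have hint : ∫ t in Set.Ici (0:ℝ), z t = 1 - ∏ i, α i / β i := by
    simp_rw [hz, integral_Ici_sum_mul_exp_neg_mul univ (fun i => -k i) β fun i _ => hβpos i, hsum]
  refine ⟨fun t _ => hz t ▸ sum_nonneg fun i _ => ?_, hint, ?_⟩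
  · exact mul_nonneg (neg_nonneg.mpr (hk_neg i).le) (Real.exp_pos _).le
  · rw [hint, sub_lt_self_iff]
    exact prod_pos fun i _ => div_pos (hpos i) (hβpos i)

/-- With interlacing parameters, `z(t) = Σ (-kᵢ) e^{-βᵢ t}` is nonnegative on
`[0,∞)` and `∫₀^∞ z = 1 - ∏ αᵢ/βᵢ < 1`. -/
theorem stmt9 (N : ℕ) (hN : 1 ≤ N) (α β : Fin N → ℝ)
    (hpos : ∀ i, 0 < α i)
    (hab : ∀ i, α i < β i)
    (hba : ∀ i j : Fin N, i < j → β i < α j)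
    (k : Fin N → ℝ)
    (hk : ∀ i, k i = (α i - β i) *
      ∏ j ∈ Finset.univ.erase i, (α j - β i) / (β j - β i))
    (z : ℝ → ℝ) (hz : ∀ t, z t = ∑ i, (-(k i)) * Real.exp (-(β i) * t)) :
    (∀ t : ℝ, 0 ≤ t → 0 ≤ z t) ∧
      (∫ t in Set.Ici (0:ℝ), z t) = 1 - ∏ i, α i / β i ∧
      (∫ t in Set.Ici (0:ℝ), z t) < 1 :=
  stmt9_general N α β hpos hab hba k hk z hz
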